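/- Let n ≥ 2 be even. There exist configurations (ẑ_1,…,ẑ_n) on the unit circle, a ground truth (z*_1,…,z*_n), and corrupted measurements z_{jk} ∈ C_1 with exactly one corrupted edge per node in the complete graph K_n, such that every coordinate ẑ_j is a local minimizer of its coordinate energy F^j(y) = Σ_{k≠j} d_∠(y, z_{jk} ẑ_k), yet 0 < δ(ẑ) < π, i.e., ẑ does not equal z* up to a global rotation. -/

import Mathlib

/-- The angular distance on the unit circle. -/
noncomputable def dAng (z w : ℂ) : ℝ := |(z * (starRingEnd ℂ) w).arg|

/-!
Take `ẑ ≡ 1`, let `z*` be `1` on even and `i` on odd indices, and corrupt the edge between `j`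
and its mirror image `n - 1 - j` (which has the other parity) by replacing its measurement with
`1`. For every `j`, the points `z_{jk} ẑ_k` then equal `1` for all `k` of the parity of `j` and
for the mirror image of `j`, i.e. for a weak majority of the `k ≠ j`. In any pseudometric space a
point carrying a weak majority of the data minimizes the sum of distances to the data, and the
angular distance is the metric of `Real.Angle` pulled back along `arg`, so `ẑ_j = 1` is even a
global minimizer of `F^j`, while `ẑ` is not a rotation of `z*`.
-/

open Finset ComplexConjugate

theorem sum_dist_le_sum_dist_of_card_sdiff_le {ι α : Type*} [DecidableEq ι] [PseudoMetricSpace α]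
    {s t : Finset ι} {w : ι → α} {x : α} (hts : t ⊆ s) (ht : ∀ k ∈ t, w k = x)
    (hcard : #(s \ t) ≤ #t) (y : α) :
    ∑ k ∈ s, dist x (w k) ≤ ∑ k ∈ s, dist y (w k) := by
  rw [← sum_sdiff hts, ← sum_sdiff hts (f := fun k ↦ dist y (w k))]
  have h_on_t : ∑ k ∈ t, dist x (w k) = 0 := sum_eq_zero fun k hk ↦ by rw [ht k hk, dist_self]
  have h_on_t' : ∑ k ∈ t, dist y (w k) = #t * dist x y := by
    rw [sum_congr rfl fun k hk ↦ by rw [ht k hk, dist_comm], sum_const, nsmul_eq_mul]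
  have h_off_t : ∑ k ∈ s \ t, dist x (w k) ≤ #(s \ t) * dist x y + ∑ k ∈ s \ t, dist y (w k) := by
    rw [← nsmul_eq_mul, ← sum_const, ← sum_add_distrib]
    exact sum_le_sum fun k _ ↦ dist_triangle _ _ _
  have h_majority : (#(s \ t) : ℝ) * dist x y ≤ #t * dist x y :=
    mul_le_mul_of_nonneg_right (by exact_mod_cast hcard) dist_nonneg
  linarith

theorem Real.Angle.norm_coe_of_abs_le_pi {θ : ℝ} (h : |θ| ≤ Real.pi) :
    ‖(θ : Real.Angle)‖ = |θ| :=
  (AddCircle.norm_coe_eq_abs_iff (p := 2 * Real.pi) Real.two_pi_pos.ne').2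
    (by rw [abs_of_pos Real.two_pi_pos]; linarith)

theorem dAng_eq_dist {z w : ℂ} (hz : z ≠ 0) (hw : w ≠ 0) :
    dAng z w = dist (z.arg : Real.Angle) w.arg := by
  rw [dist_eq_norm, sub_eq_add_neg, ← Complex.arg_conj_coe_angle,
    ← Complex.arg_mul_coe_angle hz ((map_ne_zero _).2 hw),
    Real.Angle.norm_coe_of_abs_le_pi (Complex.abs_arg_le_pi _), dAng]

theorem sum_dAng_le_sum_dAng_of_card_sdiff_le {ι : Type*} [DecidableEq ι] {s t : Finset ι}
    {w : ι → ℂ} {x y : ℂ} (hx : x ≠ 0) (hy : y ≠ 0) (hw : ∀ k ∈ s, w k ≠ 0) (hts : t ⊆ s)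
    (ht : ∀ k ∈ t, w k = x) (hcard : #(s \ t) ≤ #t) :
    ∑ k ∈ s, dAng x (w k) ≤ ∑ k ∈ s, dAng y (w k) := by
  rw [sum_congr rfl fun k hk ↦ dAng_eq_dist hx (hw k hk),
    sum_congr rfl fun k hk ↦ dAng_eq_dist hy (hw k hk)]
  exact sum_dist_le_sum_dist_of_card_sdiff_le hts (fun k hk ↦ by rw [ht k hk]) hcard _

theorem Fin.rev_ne_self {n : ℕ} (hn : Even n) (j : Fin n) : j.rev ≠ j := by
  intro h
  have h_val := congrArg Fin.val h
  rw [Fin.val_rev] at h_val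
  obtain ⟨m, rfl⟩ := hn
  omega

theorem Fin.even_val_rev_iff {n : ℕ} (hn : Even n) (j : Fin n) :
    Even (j.rev : ℕ) ↔ ¬Even (j : ℕ) := by
  rw [Fin.val_rev, Nat.even_sub (by omega)]
  simp [hn, Nat.even_add_one]

namespace SpuriousFixedPoint

variable {n : ℕ}

noncomputable def groundTruth (j : Fin n) : ℂ := if Even (j : ℕ) then 1 else Complex.I

noncomputable def measurement (j k : Fin n) : ℂ :=
  if k = j.rev then 1 else groundTruth j * conj (groundTruth k)

theorem norm_groundTruth (j : Fin n) : ‖groundTruth j‖ = 1 := by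
  unfold groundTruth
  split_ifs <;> simp

theorem norm_measurement (j k : Fin n) : ‖measurement j k‖ = 1 := by
  unfold measurement
  split_ifs <;> simp [norm_groundTruth]

theorem measurement_of_even_iff {j k : Fin n} (h : Even (j : ℕ) ↔ Even (k : ℕ)) :
    measurement j k = 1 := by
  have h_eq : groundTruth k = groundTruth j := by simp [groundTruth, h]
  unfold measurement
  split_ifs
  · rfl
  · rw [h_eq, Complex.mul_conj, Complex.normSq_eq_norm_sq, norm_groundTruth]
    simp

/-- `Fin.rev` flips parity, so it injects the `k` with `measurement j k ≠ 1` into those with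
`measurement j k = 1`. -/
theorem card_sdiff_filter_measurement_le (hn : Even n) (j : Fin n) :
    #((univ.erase j) \ (univ.erase j).filter (measurement j · = 1)) ≤
      #((univ.erase j).filter (measurement j · = 1)) := by
  refine card_le_card_of_injOn Fin.rev (fun k hk ↦ ?_) Fin.rev_injective.injOn
  rw [mem_coe, mem_sdiff, mem_filter] at hk
  obtain ⟨hk_mem, hk_not_mem⟩ := hk
  have hk_ne : measurement j k ≠ 1 := fun h ↦ hk_not_mem ⟨hk_mem, h⟩
  rw [mem_coe, mem_filter, mem_erase]
  refine ⟨⟨fun h ↦ hk_ne ?_, mem_univ _⟩, measurement_of_even_iff ?_⟩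
  · rw [measurement, if_pos (Fin.rev_eq_iff.1 h)]
  · have h_parity : ¬(Even (j : ℕ) ↔ Even (k : ℕ)) := fun h ↦ hk_ne (measurement_of_even_iff h)
    rw [Fin.even_val_rev_iff hn]
    tauto

theorem sum_dAng_measurement_le (hn : Even n) (j : Fin n) {y : ℂ} (hy : y ≠ 0) :
    ∑ k ∈ univ.erase j, dAng 1 (measurement j k) ≤ ∑ k ∈ univ.erase j, dAng y (measurement j k) :=
  sum_dAng_le_sum_dAng_of_card_sdiff_le one_ne_zero hy
    (fun k _ ↦ norm_ne_zero_iff.1 (by rw [norm_measurement]; exact one_ne_zero))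
    (filter_subset _ _) (fun _ hk ↦ (mem_filter.1 hk).2) (card_sdiff_filter_measurement_le hn j)

theorem dAng_conj_groundTruth_lt_pi (j k : Fin n) :
    dAng (conj (groundTruth j)) (conj (groundTruth k)) < Real.pi := by
  have hpi := Real.pi_pos
  unfold dAng groundTruth
  split_ifs <;> simp [abs_of_pos, hpi]

theorem dAng_conj_groundTruth_rev_pos (hn : Even n) (j : Fin n) :
    0 < dAng (conj (groundTruth j)) (conj (groundTruth j.rev)) := by
  unfold dAng groundTruth
  simp only [Fin.even_val_rev_iff hn]
  split_ifs <;> simp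

end SpuriousFixedPoint

open SpuriousFixedPoint in
/-- Spurious fixed points for `L_1` multiple rotation averaging: for every even `n ≥ 2` there
exist a configuration `ẑ`, a ground truth `z*`, and measurements `zm` corrupted on a perfect
matching `M` of the complete graph, such that each `ẑ_j` is a local minimizer of its coordinate
energy `F^j(y) = Σ_{k ≠ j} d_∠(y, zm_{jk} ẑ_k)`, yet `0 < δ(ẑ) < π`. -/
theorem spurious_fixed_points_exist (n : ℕ) (hn : 2 ≤ n) (heven : Even n) :
    ∃ (zhat zstar : Fin n → ℂ) (zm : Fin n → Fin n → ℂ) (M : Fin n → Fin n),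
      (∀ j, ‖zhat j‖ = 1) ∧
      (∀ j, ‖zstar j‖ = 1) ∧
      (∀ j k, j ≠ k → ‖zm j k‖ = 1) ∧
      (∀ j, M j ≠ j) ∧ (∀ j, M (M j) = j) ∧
      (∀ j k, j ≠ k → k ≠ M j → zm j k = zstar j * (starRingEnd ℂ) (zstar k)) ∧
      (∀ j, ∃ ε > 0, ∀ y : ℂ, ‖y‖ = 1 → dAng y (zhat j) < ε →
        (∑ k ∈ Finset.univ.erase j, dAng (zhat j) (zm j k * zhat k)) ≤
          ∑ k ∈ Finset.univ.erase j, dAng y (zm j k * zhat k)) ∧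
      (∃ j k, 0 < dAng ((starRingEnd ℂ) (zstar j) * zhat j)
          ((starRingEnd ℂ) (zstar k) * zhat k)) ∧
      (∀ j k, dAng ((starRingEnd ℂ) (zstar j) * zhat j)
          ((starRingEnd ℂ) (zstar k) * zhat k) < Real.pi) := by
  refine ⟨fun _ ↦ 1, groundTruth, measurement, Fin.rev, fun _ ↦ norm_one, norm_groundTruth,
    fun j k _ ↦ norm_measurement j k, Fin.rev_ne_self heven, Fin.rev_rev,
    fun _ _ _ hk ↦ if_neg hk, fun j ↦ ⟨1, one_pos, fun y hy _ ↦ ?_⟩,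
    ⟨⟨0, by omega⟩, Fin.rev ⟨0, by omega⟩, ?_⟩, fun j k ↦ ?_⟩
  · simpa only [mul_one] using
      sum_dAng_measurement_le heven j (norm_ne_zero_iff.1 (hy ▸ one_ne_zero))
  · simpa only [mul_one] using dAng_conj_groundTruth_rev_pos heven _
  · simpa only [mul_one] using dAng_conj_groundTruth_lt_pi j k
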